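/- arXiv:1203.1714 — 2 statements merged into one kernel-verified Lean document; each statement's English description precedes it below -/
import Mathlib

section
/- Let x̄ ∈ ℝⁿ be a sparse signal with support T ⊆ {1,…,n} (i.e., x̄ₖ = 0 for every index k ∉ T), let A ∈ ℝ^{m×n} have full row rank, and let α > 0 satisfy 1/α < |x̄ₖ| for every k ∈ T. Set d = min_{k∈T} min(1/α, |x̄ₖ| − 1/α), let y = A x̄ + v, and L = {x ∈ ℝⁿ : A x = y}. Suppose A_T has full column rank. If x̂ minimizes J(x) = Σ_{k=1}^{n} F_α(|xₖ|) over L ∩ B(x̄, d), then ‖x̂ − x̄‖ ≤ 2√n (1 + ‖A_T† A_{T^c}‖) ‖A† v‖ + ‖A_T† v‖, where ‖A_T† A_{T^c}‖ denotes the ℓ₂ operator norm. -/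
/-!
On the ball `B(x̄, d)` every on-support coordinate has modulus at least `1/α`, where `F_α = 1`,
and every off-support coordinate has modulus at most `1/α`, where `α|w| ≤ F_α(w) ≤ 2α|w|`.
Comparing `x̂` with the feasible point `x̄ + A†v` therefore bounds the `ℓ₁` norm of the
off-support error by `2‖A†v‖₁ ≤ 2√n ‖A†v‖`. The on-support error is then recovered from
`A (x̂ - x̄) = v` as `A_T†v - A_T†A_{Tᶜ}(x̂ - x̄)_{Tᶜ}`. If `x̄ + A†v` leaves the ball, the bound
is immediate from `‖x̂ - x̄‖ ≤ d < ‖A†v‖`.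
-/

open scoped BigOperators
open Matrix

noncomputable section

/-- The Euclidean (`ℓ₂`) norm of a finitely-indexed real vector. -/
def l2norm {ι : Type*} [Fintype ι] (x : ι → ℝ) : ℝ :=
  Real.sqrt (∑ i, (x i) ^ 2)

/-- The `ℓ₂` operator norm of a real matrix. -/
def l2opNorm {ι κ : Type*} [Fintype ι] [Fintype κ] [DecidableEq κ] (M : Matrix ι κ ℝ) : ℝ :=
  ‖LinearMap.toContinuousLinearMap (Matrix.toEuclideanLin M)‖

/-- The approximation `F_α` to the indicator of nonzeroness. -/
def Fa (α w : ℝ) : ℝ :=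
  if |w| ≤ 1 / α then 2 * α * |w| - α ^ 2 * w ^ 2 else 1

/-- The `k`-th block (of length `D`) of a block vector. -/
def blk {N D : ℕ} (x : Fin N × Fin D → ℝ) (k : Fin N) : Fin D → ℝ :=
  fun j => x (k, j)

/-- The cost function `J(x) = ∑ₖ F_α(‖xₖ‖)`. -/
def J {N D : ℕ} (α : ℝ) (x : Fin N × Fin D → ℝ) : ℝ :=
  ∑ k, Fa α (l2norm (blk x k))

/-- Pseudo-inverse `A† = Aᵀ (A Aᵀ)⁻¹` of a full-row-rank matrix. -/
def pinvR {ι κ : Type*} [Fintype ι] [Fintype κ] [DecidableEq ι] (A : Matrix ι κ ℝ) :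
    Matrix κ ι ℝ :=
  Aᵀ * (A * Aᵀ)⁻¹

/-- Pseudo-inverse `A† = (Aᵀ A)⁻¹ Aᵀ` of a full-column-rank matrix. -/
def pinvC {ι κ : Type*} [Fintype ι] [Fintype κ] [DecidableEq κ] (A : Matrix ι κ ℝ) :
    Matrix κ ι ℝ :=
  (Aᵀ * A)⁻¹ * Aᵀ

/-- The submatrix `A_T` formed by the column blocks of `A` indexed by `T`. -/
def subCols {ι : Type*} {N D : ℕ} (A : Matrix ι (Fin N × Fin D) ℝ) (T : Finset (Fin N)) :
    Matrix ι (↥T × Fin D) ℝ :=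
  A.submatrix id (fun p => ((p.1 : Fin N), p.2))

/-- The subvector `x_T` formed by the blocks of `x` indexed by `T`. -/
def subVec {N D : ℕ} (x : Fin N × Fin D → ℝ) (T : Finset (Fin N)) : ↥T × Fin D → ℝ :=
  fun p => x ((p.1 : Fin N), p.2)

open Finset

section L2Norm

variable {ι : Type*} [Fintype ι]

lemma l2norm_eq_norm_toLp (x : ι → ℝ) : l2norm x = ‖WithLp.toLp 2 x‖ := by
  simp [l2norm, EuclideanSpace.norm_eq]

lemma l2norm_nonneg (x : ι → ℝ) : 0 ≤ l2norm x :=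
  Real.sqrt_nonneg _

lemma l2norm_sub_le (x y : ι → ℝ) : l2norm (x - y) ≤ l2norm x + l2norm y := by
  simpa only [l2norm_eq_norm_toLp, WithLp.toLp_sub] using norm_sub_le _ _

lemma abs_le_l2norm (x : ι → ℝ) (i : ι) : |x i| ≤ l2norm x :=
  Real.abs_le_sqrt (single_le_sum (fun j _ => sq_nonneg (x j)) (mem_univ i))

lemma l2norm_le_sum_abs (x : ι → ℝ) : l2norm x ≤ ∑ i, |x i| := by
  refine (Real.sqrt_le_left (sum_nonneg fun i _ => abs_nonneg _)).2 ?_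
  simpa only [sq_abs] using sum_sq_le_sq_sum_of_nonneg (fun i _ => abs_nonneg (x i))

lemma sum_abs_le_sqrt_card_mul_l2norm (s : Finset ι) (x : ι → ℝ) :
    ∑ i ∈ s, |x i| ≤ Real.sqrt (Fintype.card ι) * l2norm x := by
  refine (sum_le_sum_of_subset_of_nonneg (subset_univ s) fun i _ _ => abs_nonneg _).trans ?_
  rw [l2norm, ← Real.sqrt_mul (Nat.cast_nonneg _)]
  refine (Real.le_sqrt (sum_nonneg fun i _ => abs_nonneg _) (by positivity)).2 ?_
  simpa only [sq_abs, card_univ] using sq_sum_le_card_mul_sum_sq (s := univ) (f := fun i => |x i|)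

lemma l2norm_le_add_restrict_compl [DecidableEq ι] (T : Finset ι) (x : ι → ℝ) :
    l2norm x ≤ l2norm (fun q : ↥T => x q) + l2norm (fun q : ↥Tᶜ => x q) := by
  have hsplit : ∑ i, x i ^ 2 = ∑ q : ↥T, x q ^ 2 + ∑ q : ↥Tᶜ, x q ^ 2 := by
    rw [sum_coe_sort T (fun i => x i ^ 2), sum_coe_sort Tᶜ (fun i => x i ^ 2),
      sum_add_sum_compl]
  have ha : 0 ≤ ∑ q : ↥T, x q ^ 2 := sum_nonneg fun q _ => sq_nonneg (x q)
  have hb : 0 ≤ ∑ q : ↥Tᶜ, x q ^ 2 := sum_nonneg fun q _ => sq_nonneg (x q)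
  rw [l2norm, l2norm, l2norm, hsplit, Real.sqrt_le_left (by positivity)]
  nlinarith [Real.sq_sqrt ha, Real.sq_sqrt hb, Real.sqrt_nonneg (∑ q : ↥T, x q ^ 2),
    Real.sqrt_nonneg (∑ q : ↥Tᶜ, x q ^ 2)]

lemma l2norm_mulVec_le {κ : Type*} [Fintype κ] [DecidableEq κ] (M : Matrix ι κ ℝ)
    (x : κ → ℝ) : l2norm (M *ᵥ x) ≤ l2opNorm M * l2norm x := by
  simpa [l2norm_eq_norm_toLp, l2opNorm, Matrix.toLpLin_apply] using
    (LinearMap.toContinuousLinearMap (Matrix.toEuclideanLin M)).le_opNorm (WithLp.toLp 2 x)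

end L2Norm

lemma l2norm_restrict_le_sum_abs {ι : Type*} (T : Finset ι) (x : ι → ℝ) :
    l2norm (fun q : ↥T => x q) ≤ ∑ k ∈ T, |x k| :=
  (l2norm_le_sum_abs _).trans_eq (sum_coe_sort T fun k => |x k|)

section PseudoInverse

variable {ι κ : Type*} [Fintype κ]

lemma Matrix.isUnit_det_of_rank_eq_card [Fintype ι] [DecidableEq ι] {B : Matrix ι ι ℝ}
    (h : B.rank = Fintype.card ι) : IsUnit B.det := by
  rw [← Matrix.isUnit_iff_isUnit_det, ← Matrix.mulVec_surjective_iff_isUnit,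
    ← Matrix.coe_mulVecLin, ← LinearMap.range_eq_top]
  apply Submodule.eq_top_of_finrank_eq
  rw [Module.finrank_fintype_fun_eq_card]
  exact h

lemma mul_pinvR_of_rank_eq [Fintype ι] [DecidableEq ι] {A : Matrix ι κ ℝ}
    (h : A.rank = Fintype.card ι) : A * pinvR A = 1 := by
  rw [pinvR, ← Matrix.mul_assoc, Matrix.mul_nonsing_inv]
  exact Matrix.isUnit_det_of_rank_eq_card (by rw [Matrix.rank_self_mul_transpose, h])

lemma pinvC_mul_of_rank_eq [Fintype ι] [DecidableEq κ] {A : Matrix ι κ ℝ}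
    (h : A.rank = Fintype.card κ) : pinvC A * A = 1 := by
  rw [pinvC, Matrix.mul_assoc, Matrix.nonsing_inv_mul]
  exact Matrix.isUnit_det_of_rank_eq_card (by rw [Matrix.rank_transpose_mul_self, h])

lemma mulVec_eq_add_submatrix_compl [DecidableEq κ] (A : Matrix ι κ ℝ) (T : Finset κ)
    (x : κ → ℝ) :
    A *ᵥ x = A.submatrix id (Subtype.val : ↥T → κ) *ᵥ (fun q => x q) +
      A.submatrix id (Subtype.val : ↥Tᶜ → κ) *ᵥ (fun q => x q) := by
  ext i
  simp only [Matrix.mulVec, dotProduct, Matrix.submatrix_apply, id_eq, Pi.add_apply]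
  rw [sum_coe_sort T (fun j => A i j * x j), sum_coe_sort Tᶜ (fun j => A i j * x j),
    sum_add_sum_compl]

lemma l2norm_restrict_le_of_mulVec_eq [Fintype ι] [DecidableEq κ] (A : Matrix ι κ ℝ)
    (T : Finset κ) (hcol : (A.submatrix id (Subtype.val : ↥T → κ)).rank = T.card)
    {e : κ → ℝ} {v : ι → ℝ} (he : A *ᵥ e = v) :
    l2norm (fun q : ↥T => e q) ≤
      l2norm (pinvC (A.submatrix id (Subtype.val : ↥T → κ)) *ᵥ v) +
        l2opNorm (pinvC (A.submatrix id (Subtype.val : ↥T → κ)) *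
          A.submatrix id (Subtype.val : ↥Tᶜ → κ)) * l2norm (fun q : ↥Tᶜ => e q) := by
  set P := pinvC (A.submatrix id (Subtype.val : ↥T → κ))
  have hP : P * A.submatrix id Subtype.val = 1 :=
    pinvC_mul_of_rank_eq (hcol.trans (Fintype.card_coe T).symm)
  have heT : (fun q : ↥T => e q) =
      P *ᵥ v - (P * A.submatrix id (Subtype.val : ↥Tᶜ → κ)) *ᵥ (fun q : ↥Tᶜ => e q) := by
    rw [← he, mulVec_eq_add_submatrix_compl A T e, Matrix.mulVec_add, Matrix.mulVec_mulVec,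
      Matrix.mulVec_mulVec, hP, Matrix.one_mulVec, add_sub_cancel_right]
  rw [heT]
  exact (l2norm_sub_le _ _).trans (add_le_add_right (l2norm_mulVec_le _ _) _)

end PseudoInverse

section Fa

variable {α : ℝ}

lemma Fa_le_one (w : ℝ) : Fa α w ≤ 1 := by
  unfold Fa
  split_ifs
  · nlinarith [sq_nonneg (α * |w| - 1), sq_abs w]
  · exact le_rfl

lemma Fa_le_two_mul_abs (hα : 0 < α) (w : ℝ) : Fa α w ≤ 2 * α * |w| := by
  unfold Fa
  split_ifs with h
  · nlinarith [sq_nonneg (α * w)]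
  · rw [not_le, div_lt_iff₀ hα] at h
    linarith

lemma Fa_eq_one_of_le_abs (hα : 0 < α) {w : ℝ} (h : 1 / α ≤ |w|) : Fa α w = 1 := by
  unfold Fa
  split_ifs with h'
  · have hw : |w| = 1 / α := le_antisymm h' h
    rw [← sq_abs w, hw]
    field_simp
    ring
  · rfl

lemma mul_abs_le_Fa (hα : 0 < α) {w : ℝ} (h : |w| ≤ 1 / α) : α * |w| ≤ Fa α w := by
  rw [Fa, if_pos h]
  have h1 : α * |w| ≤ 1 := by rwa [le_div_iff₀ hα, mul_comm] at h
  nlinarith [mul_nonneg (mul_nonneg hα.le (abs_nonneg w)) (sub_nonneg.2 h1), sq_abs w]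

end Fa

section Comparison

variable {ι : Type*} [Fintype ι] [DecidableEq ι] {α : ℝ}

lemma sum_compl_abs_le_of_sum_Fa_le (hα : 0 < α) (T : Finset ι) {xhat x : ι → ℝ}
    (hT : ∀ k ∈ T, Fa α |xhat k| = 1) (hTc : ∀ k ∉ T, |xhat k| ≤ 1 / α)
    (hle : ∑ k, Fa α |xhat k| ≤ ∑ k, Fa α |x k|) :
    ∑ k ∈ Tᶜ, |xhat k| ≤ 2 * ∑ k ∈ Tᶜ, |x k| := by
  have hon : ∑ k ∈ T, Fa α |x k| ≤ ∑ k ∈ T, Fa α |xhat k| := by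
    rw [sum_congr rfl hT]
    exact sum_le_sum fun k _ => Fa_le_one _
  have hoff : ∑ k ∈ Tᶜ, Fa α |xhat k| ≤ ∑ k ∈ Tᶜ, Fa α |x k| := by
    rw [← sum_add_sum_compl T fun k => Fa α |xhat k|,
      ← sum_add_sum_compl T fun k => Fa α |x k|] at hle
    linarith
  have hlow : α * ∑ k ∈ Tᶜ, |xhat k| ≤ ∑ k ∈ Tᶜ, Fa α |xhat k| := by
    rw [mul_sum]
    refine sum_le_sum fun k hk => ?_
    simpa only [abs_abs] using
      mul_abs_le_Fa hα (w := |xhat k|) ((abs_abs _).trans_le (hTc k (mem_compl.1 hk)))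
  have hup : ∑ k ∈ Tᶜ, Fa α |x k| ≤ α * (2 * ∑ k ∈ Tᶜ, |x k|) := by
    rw [mul_sum, mul_sum]
    refine sum_le_sum fun k _ => ?_
    simpa only [abs_abs, mul_assoc, mul_left_comm α] using Fa_le_two_mul_abs hα |x k|
  exact le_of_mul_le_mul_left (hlow.trans (hoff.trans hup)) hα

lemma sum_compl_abs_sub_le_of_sum_Fa_le (hα : 0 < α) (T : Finset ι) {xbar xhat x : ι → ℝ}
    {d : ℝ} (hsupp : ∀ k ∉ T, xbar k = 0) (hdα : d ≤ 1 / α)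
    (hdT : ∀ k ∈ T, d ≤ |xbar k| - 1 / α) (hball : l2norm (xhat - xbar) ≤ d)
    (hle : ∑ k, Fa α |xhat k| ≤ ∑ k, Fa α |x k|) :
    ∑ k ∈ Tᶜ, |(xhat - xbar) k| ≤ 2 * ∑ k ∈ Tᶜ, |(x - xbar) k| := by
  have hcoord (k : ι) : |xhat k - xbar k| ≤ d := (abs_le_l2norm (xhat - xbar) k).trans hball
  have hcompl (y : ι → ℝ) : ∑ k ∈ Tᶜ, |(y - xbar) k| = ∑ k ∈ Tᶜ, |y k| :=
    sum_congr rfl fun k hk => by simp [hsupp k (mem_compl.1 hk)]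
  rw [hcompl, hcompl]
  refine sum_compl_abs_le_of_sum_Fa_le hα T (fun k hk => ?_) (fun k hk => ?_) hle
  · refine Fa_eq_one_of_le_abs hα ?_
    rw [abs_abs]
    linarith [abs_sub_abs_le_abs_sub (xbar k) (xhat k), abs_sub_comm (xbar k) (xhat k),
      hcoord k, hdT k hk]
  · simpa [hsupp k hk] using (hcoord k).trans hdα

end Comparison

theorem zap_stability_general {m n : ℕ} (A : Matrix (Fin m) (Fin n) ℝ)
    (xbar xhat : Fin n → ℝ) (v : Fin m → ℝ) (T : Finset (Fin n)) (hT : T.Nonempty)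
    (α : ℝ) (hα : 0 < α)
    (hsupp : ∀ k ∉ T, xbar k = 0)
    (hrow : A.rank = m)
    (hcol : (A.submatrix id (Subtype.val : ↥T → Fin n)).rank = T.card)
    (d : ℝ) (hd : d = T.inf' hT fun k => min (1 / α) (|xbar k| - 1 / α))
    (hfeas : A *ᵥ xhat = A *ᵥ xbar + v)
    (hball : l2norm (xhat - xbar) ≤ d)
    (hmin : ∀ x : Fin n → ℝ, A *ᵥ x = A *ᵥ xbar + v → l2norm (x - xbar) ≤ d →
      ∑ k, Fa α |xhat k| ≤ ∑ k, Fa α |x k|) :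
    l2norm (xhat - xbar) ≤
      2 * Real.sqrt n *
          (1 + l2opNorm (pinvC (A.submatrix id (Subtype.val : ↥T → Fin n)) *
            A.submatrix id (Subtype.val : ↥(Tᶜ) → Fin n))) *
        l2norm (pinvR A *ᵥ v) +
      l2norm (pinvC (A.submatrix id (Subtype.val : ↥T → Fin n)) *ᵥ v) := by
  set p := pinvR A *ᵥ v
  set op := l2opNorm (pinvC (A.submatrix id (Subtype.val : ↥T → Fin n)) *
    A.submatrix id (Subtype.val : ↥(Tᶜ) → Fin n))
  obtain ⟨k₀, hk₀⟩ := hT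
  have hconst : 1 ≤ 2 * Real.sqrt n * (1 + op) := by
    have := Real.one_le_sqrt.2 (Nat.one_le_cast.2 (Fin.pos k₀))
    nlinarith [show 0 ≤ op from norm_nonneg _]
  rcases lt_or_ge d (l2norm p) with hp | hp
  · exact le_add_of_le_of_nonneg (hball.trans (hp.le.trans
      (le_mul_of_one_le_left (l2norm_nonneg p) hconst))) (l2norm_nonneg _)
  have hfeas₀ : A *ᵥ (xbar + p) = A *ᵥ xbar + v := by
    rw [Matrix.mulVec_add, Matrix.mulVec_mulVec,
      mul_pinvR_of_rank_eq (hrow.trans (Fintype.card_fin m).symm), Matrix.one_mulVec]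
  have hl1 := sum_compl_abs_sub_le_of_sum_Fa_le hα T hsupp
    (hd ▸ (inf'_le _ hk₀).trans (min_le_left _ _))
    (fun k hk => hd ▸ (inf'_le _ hk).trans (min_le_right _ _)) hball
    (hmin _ hfeas₀ (by rwa [add_sub_cancel_left]))
  rw [add_sub_cancel_left] at hl1
  have hoff : l2norm (fun q : ↥Tᶜ => (xhat - xbar) q) ≤ 2 * (Real.sqrt n * l2norm p) := by
    simpa using (l2norm_restrict_le_sum_abs _ _).trans (hl1.trans
      (mul_le_mul_of_nonneg_left (sum_abs_le_sqrt_card_mul_l2norm Tᶜ p) zero_le_two))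
  have hon := l2norm_restrict_le_of_mulVec_eq A T hcol
    (show A *ᵥ (xhat - xbar) = v by rw [Matrix.mulVec_sub, hfeas, add_sub_cancel_left])
  calc l2norm (xhat - xbar) ≤ _ := l2norm_le_add_restrict_compl T _
    _ ≤ _ + op * (2 * (Real.sqrt n * l2norm p)) + 2 * (Real.sqrt n * l2norm p) :=
      add_le_add (hon.trans (by gcongr; exact norm_nonneg _)) hoff
    _ = _ := by ring

/-- **Stability of the local minimum of the ZAP cost function (scalar case, `D = 1`).**
If `x̂` minimizes `J(x) = ∑ₖ F_α(|xₖ|)` over `L ∩ B(x̄, d)`, then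
`‖x̂ − x̄‖ ≤ 2√n (1 + ‖A_T† A_{Tᶜ}‖) ‖A† v‖ + ‖A_T† v‖`. -/
theorem zap_stability {m n : ℕ} (A : Matrix (Fin m) (Fin n) ℝ)
    (xbar xhat : Fin n → ℝ) (v : Fin m → ℝ) (T : Finset (Fin n)) (hT : T.Nonempty)
    (α : ℝ) (hα : 0 < α)
    (hsupp : ∀ k ∉ T, xbar k = 0)
    (hrow : A.rank = m)
    (hcol : (A.submatrix id (Subtype.val : ↥T → Fin n)).rank = T.card)
    (halpha : ∀ k ∈ T, 1 / α < |xbar k|)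
    (d : ℝ) (hd : d = T.inf' hT fun k => min (1 / α) (|xbar k| - 1 / α))
    (hfeas : A *ᵥ xhat = A *ᵥ xbar + v)
    (hball : l2norm (xhat - xbar) ≤ d)
    (hmin : ∀ x : Fin n → ℝ, A *ᵥ x = A *ᵥ xbar + v → l2norm (x - xbar) ≤ d →
      ∑ k, Fa α |xhat k| ≤ ∑ k, Fa α |x k|) :
    l2norm (xhat - xbar) ≤
      2 * Real.sqrt n *
          (1 + l2opNorm (pinvC (A.submatrix id (Subtype.val : ↥T → Fin n)) *
            A.submatrix id (Subtype.val : ↥(Tᶜ) → Fin n))) *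
        l2norm (pinvR A *ᵥ v) +
      l2norm (pinvC (A.submatrix id (Subtype.val : ↥T → Fin n)) *ᵥ v) :=
  zap_stability_general A xbar xhat v T hT α hα hsupp hrow hcol d hd hfeas hball hmin
end
end

section
/- Let M ∈ ℝ^{s×m} be the matrix M = (A_TᵀA_T)⁻¹A_Tᵀ for a matrix A_T ∈ ℝ^{m×s} of full column rank, and let v be a random vector in ℝ^m whose components are independent, each with mean 0 and variance σ². Then the mean squared error of the oracle estimate satisfies E‖M v‖² = σ² · tr((A_TᵀA_T)⁻¹). -/
/-! Each coordinate of `A_T† v` is a linear combination `a ⬝ᵥ v` of independent centred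
variables, so its second moment is its variance, which by independence is `σ² ‖a‖²`. Summing over
the rows gives `σ² tr(A_T† A_T†ᵀ)`, and `A_T† A_T†ᵀ = (A_TᵀA_T)⁻¹`. -/

open scoped BigOperators
open Matrix

noncomputable section

theorem l2norm_sq {ι : Type*} [Fintype ι] (x : ι → ℝ) : l2norm x ^ 2 = ∑ i, x i ^ 2 :=
  Real.sq_sqrt (by positivity)

theorem Matrix.isUnit_of_rank_eq_card {n K : Type*} [Fintype n] [DecidableEq n] [Field K]
    {B : Matrix n n K} (h : B.rank = Fintype.card n) : IsUnit B := by
  have hrange : LinearMap.range B.mulVecLin = ⊤ :=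
    Submodule.eq_top_of_finrank_eq (by rw [Module.finrank_fintype_fun_eq_card]; exact h)
  exact mulVec_surjective_iff_isUnit.mp (LinearMap.range_eq_top.mp hrange)

theorem pinvC_mul_transpose_pinvC {ι κ : Type*} [Fintype ι] [Fintype κ] [DecidableEq κ]
    {A : Matrix ι κ ℝ} (hA : IsUnit (Aᵀ * A)) : pinvC A * (pinvC A)ᵀ = (Aᵀ * A)⁻¹ := by
  have hdet : IsUnit (Aᵀ * A).det := (isUnit_iff_isUnit_det _).mp hA
  rw [pinvC, transpose_mul, transpose_nonsing_inv, transpose_mul, transpose_transpose,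
    Matrix.mul_assoc, ← Matrix.mul_assoc Aᵀ, mul_nonsing_inv _ hdet, Matrix.mul_one]

namespace ProbabilityTheory

open MeasureTheory

variable {ι Ω : Type*} [Fintype ι] [MeasurableSpace Ω] {μ : Measure Ω} {v : ι → Ω → ℝ} {σ : ℝ}

theorem memLp_dotProduct {p : ENNReal} (hv : ∀ i, MemLp (v i) p μ) (a : ι → ℝ) :
    MemLp (fun ω => a ⬝ᵥ fun i => v i ω) p μ := by
  simp only [dotProduct]
  exact memLp_finsetSum _ fun i _ => (hv i).const_mul (a i)

variable [IsFiniteMeasure μ]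

theorem integral_dotProduct_sq_of_iIndepFun (hind : iIndepFun v μ) (hL2 : ∀ i, MemLp (v i) 2 μ)
    (hmean : ∀ i, ∫ ω, v i ω ∂μ = 0) (hvar : ∀ i, variance (v i) μ = σ ^ 2) (a : ι → ℝ) :
    ∫ ω, (a ⬝ᵥ fun i => v i ω) ^ 2 ∂μ = σ ^ 2 * (a ⬝ᵥ a) := by
  have hterm : ∀ i, MemLp (fun ω => a i * v i ω) 2 μ := fun i => (hL2 i).const_mul (a i)
  have hcentered : ∫ ω, (a ⬝ᵥ fun i => v i ω) ∂μ = 0 := by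
    simp only [dotProduct]
    rw [integral_finsetSum _ fun i _ => (hterm i).integrable one_le_two]
    simp [integral_const_mul, hmean]
  have hsum : (fun ω => a ⬝ᵥ fun i => v i ω) = ∑ i, fun ω => a i * v i ω := by
    ext ω
    simp only [dotProduct, Finset.sum_apply]
  calc ∫ ω, (a ⬝ᵥ fun i => v i ω) ^ 2 ∂μ
      = variance (fun ω => a ⬝ᵥ fun i => v i ω) μ :=
        (variance_of_integral_eq_zero (memLp_dotProduct hL2 a).aemeasurable hcentered).symm
    _ = ∑ i, variance (fun ω => a i * v i ω) μ := by
        rw [hsum]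
        exact IndepFun.variance_sum (fun i _ => hterm i) fun i _ j _ hij =>
          (hind.indepFun hij).comp (measurable_const_mul (a i)) (measurable_const_mul (a j))
    _ = σ ^ 2 * (a ⬝ᵥ a) := by
        simp only [variance_const_mul, hvar, dotProduct, Finset.mul_sum]
        exact Finset.sum_congr rfl fun i _ => by ring

theorem integral_l2norm_mulVec_sq_of_iIndepFun {κ : Type*} [Fintype κ] (hind : iIndepFun v μ)
    (hL2 : ∀ i, MemLp (v i) 2 μ) (hmean : ∀ i, ∫ ω, v i ω ∂μ = 0)
    (hvar : ∀ i, variance (v i) μ = σ ^ 2) (M : Matrix κ ι ℝ) :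
    ∫ ω, l2norm (M *ᵥ fun i => v i ω) ^ 2 ∂μ = σ ^ 2 * (M * Mᵀ).trace := by
  simp only [l2norm_sq, mulVec]
  rw [integral_finsetSum _ fun j _ => (memLp_dotProduct hL2 (M j)).integrable_sq]
  simp only [integral_dotProduct_sq_of_iIndepFun hind hL2 hmean hvar, ← Finset.mul_sum]
  simp [trace, mul_apply, dotProduct]

end ProbabilityTheory

open MeasureTheory ProbabilityTheory in
/-- The mean squared error of the oracle estimate: if the components of the noise `v`
are independent with mean `0` and variance `σ²`, then
`E ‖A_T† v‖² = σ² · tr((A_Tᵀ A_T)⁻¹)`. -/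
theorem oracle_mse {m s : ℕ} (A_T : Matrix (Fin m) (Fin s) ℝ)
    (hcol : A_T.rank = s)
    {Ω : Type*} [MeasureSpace Ω] [IsProbabilityMeasure (ℙ : Measure Ω)]
    (v : Fin m → Ω → ℝ) (σ : ℝ)
    (hind : iIndepFun v ℙ)
    (hL2 : ∀ i, MemLp (v i) 2 ℙ)
    (hmean : ∀ i, ∫ ω, v i ω ∂ℙ = 0)
    (hvar : ∀ i, variance (v i) ℙ = σ ^ 2) :
    ∫ ω, (l2norm (pinvC A_T *ᵥ fun i => v i ω)) ^ 2 ∂ℙ =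
      σ ^ 2 * (A_Tᵀ * A_T)⁻¹.trace := by
  have hgram : IsUnit (A_Tᵀ * A_T) :=
    Matrix.isUnit_of_rank_eq_card (by rw [rank_transpose_mul_self, hcol, Fintype.card_fin])
  rw [integral_l2norm_mulVec_sq_of_iIndepFun hind hL2 hmean hvar,
    pinvC_mul_transpose_pinvC hgram]
end
end
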